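/- Let H be a complex separable infinite-dimensional Hilbert space. There exist two sequences (E_n)_{n ≥ 0} and (F_n)_{n ≥ 0} of closed subspaces of H such that each sequence satisfies: (1) it is increasing (E_n ⊆ E_{n+1} and F_n ⊆ F_{n+1}); (2) each subspace is infinite-dimensional and has infinite codimension in the next one; (3) its union is dense in H; and moreover (∪_{n ≥ 0} E_n) ∩ (∪_{n ≥ 0} F_n) = {0}. -/

import Mathlib

/-!
Take a Hilbert basis `e (b, k)` of `H` indexed by `ℕ × ℕ` and view `H` as an orthogonal sum of
countably many copies of the Hardy space of the disc, `e (b, k)` playing the role of `z ^ k` in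
the `b`-th copy. Let `E n` be the closed span of the monomials of degree `≤ n` in all copies and
`F m` the closed span of the Szegő kernels `∑ₖ ν_j ^ k z ^ k`, `j ≤ m`, where `ν_j = 1 / (j + 2)`.
A vector orthogonal to every kernel has coordinates whose generating power series vanishes at
the points `ν_j → 0`, so it is zero; hence `⋃ F m` is dense. If `x ∈ E n ∩ F m`, pairing `x` with
the coefficient vectors of `P * X ^ t`, where `P = ∏_{j ≤ m} (X - ν_j)`, annihilates the kernels;
since `P(0) ≠ 0` these pairings form a triangular system in the finitely many coordinates of `x`,
which therefore all vanish.
-/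

open Filter Topology Polynomial Submodule
open scoped InnerProductSpace

theorem eq_zero_of_tsum_mul_pow_eq_zero {𝕜 : Type*} [NontriviallyNormedField 𝕜]
    [CompleteSpace 𝕜] {c : ℕ → 𝕜} {C : ℝ} (hc : ∀ k, ‖c k‖ ≤ C) {z : ℕ → 𝕜}
    (hz : Tendsto z atTop (𝓝[≠] 0)) (h : ∀ j, ∑' k, c k * z j ^ k = 0) :
    c = 0 := by
  set p := FormalMultilinearSeries.ofScalars 𝕜 c
  have hrad : 0 < p.radius := zero_lt_one.trans_le <| p.le_radius_of_bound C fun n => by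
    simpa [p] using hc n
  have hp := (p.hasFPowerSeriesOnBall hrad).hasFPowerSeriesAt
  have hzero : ∃ᶠ w in 𝓝[≠] 0, p.sum w = 0 :=
    hz.frequently (Frequently.of_forall fun j => by
      simpa [p, ← FormalMultilinearSeries.ofScalarsSum.eq_def,
        FormalMultilinearSeries.ofScalars_sum_eq] using h j)
  simpa [p] using hp.eq_zero_of_eventually
    (hp.analyticAt.frequently_zero_iff_eventually_zero.1 hzero)

theorem Polynomial.sum_mul_X_pow_eq_coeff_zero_mul {R : Type*} [Semiring R] (P : R[X])
    {c : ℕ → R} {t : ℕ} (hc : ∀ k, t < k → c k = 0) :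
    (P * X ^ t).sum (fun k a => a * c k) = P.coeff 0 * c t := by
  rw [Polynomial.sum_def, Finset.sum_eq_single t]
  · simp [coeff_mul_X_pow']
  · intro k _ hkt
    rcases hkt.lt_or_gt with hlt | hgt
    · simp [coeff_mul_X_pow', hlt.not_ge]
    · simp [hc k hgt]
  · intro ht
    simp [notMem_support_iff.1 ht]

theorem Polynomial.eq_zero_of_sum_mul_X_pow_eq_zero {R : Type*} [Semiring R] [NoZeroDivisors R]
    {P : R[X]} (hP : P.coeff 0 ≠ 0) {c : ℕ → R} {n : ℕ} (hc : ∀ k, n < k → c k = 0)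
    (h : ∀ t, (P * X ^ t).sum (fun k a => a * c k) = 0) : c = 0 := by
  by_contra hne
  have hfin : {k | c k ≠ 0}.Finite :=
    (Set.finite_Iic n).subset fun k hk => le_of_not_gt fun hnk => hk (hc k hnk)
  obtain ⟨t, ht, htop⟩ := Set.exists_max_image _ id hfin
    (by simpa [funext_iff, Set.Nonempty] using hne)
  have hlast : ∀ k, t < k → c k = 0 := fun k htk => by_contra fun hk => (htop k hk).not_gt htk
  exact mul_ne_zero hP ht ((sum_mul_X_pow_eq_coeff_zero_mul P hlast).symm.trans (h t))

theorem Submodule.not_finiteDimensional_quotient_of_dual {K V ι : Type*} [Field K]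
    [AddCommGroup V] [Module K V] [Infinite ι] {S T : Submodule K V} (v : ι → V)
    (hv : ∀ i, v i ∈ S) (f : ι → Module.Dual K V) (hfT : ∀ i, T ≤ LinearMap.ker (f i))
    (hf : Pairwise fun i j => f i (v j) = 0) (hf' : ∀ i, f i (v i) ≠ 0) :
    ¬ FiniteDimensional K (S ⧸ T.comap S.subtype) := by
  set T' := T.comap S.subtype
  let f' : ι → Module.Dual K (S ⧸ T') := fun i =>
    (f i (v i))⁻¹ • T'.liftQ ((f i).comp S.subtype) fun x hx => hfT i hx
  have hf'_apply : ∀ i j, f' i (T'.mkQ ⟨v j, hv j⟩) = (f i (v i))⁻¹ * f i (v j) :=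
    fun _ _ => rfl
  have hli : LinearIndependent K fun i => T'.mkQ ⟨v i, hv i⟩ :=
    .of_pairwise_dual_eq_zero_one _ f'
      (fun i j hij => (hf'_apply i j).trans (by rw [hf hij, mul_zero]))
      (fun i => (hf'_apply i i).trans (inv_mul_cancel₀ (hf' i)))
  exact fun _ => Module.Finite.not_linearIndependent_of_infinite _ hli

theorem Submodule.not_finiteDimensional_of_dual {K V ι : Type*} [Field K]
    [AddCommGroup V] [Module K V] [Infinite ι] {S : Submodule K V} (v : ι → V)
    (hv : ∀ i, v i ∈ S) (f : ι → Module.Dual K V)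
    (hf : Pairwise fun i j => f i (v j) = 0) (hf' : ∀ i, f i (v i) ≠ 0) :
    ¬ FiniteDimensional K S := fun _ =>
  not_finiteDimensional_quotient_of_dual (T := ⊥) v hv f (fun _ => bot_le) hf hf' inferInstance

section Hilbert

variable {𝕜 E : Type*} [RCLike 𝕜] [NormedAddCommGroup E] [InnerProductSpace 𝕜 E]

theorem Orthonormal.countable [TopologicalSpace.SeparableSpace E] {ι : Type*} {v : ι → E}
    (hv : Orthonormal 𝕜 v) : Countable ι := by
  refine Pairwise.countable_of_isOpen_disjoint (s := fun i => Metric.ball (v i) 2⁻¹)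
    (fun i j hij => Metric.ball_disjoint_ball ?_) (fun _ => Metric.isOpen_ball)
    (fun i => ⟨v i, Metric.mem_ball_self (by norm_num)⟩)
  have hsq : dist (v i) (v j) ^ 2 = 2 := by
    rw [dist_eq_norm, @norm_sub_sq 𝕜, hv.inner_eq_zero hij, hv.norm_eq_one, hv.norm_eq_one]
    norm_num
  nlinarith [dist_nonneg (x := v i) (y := v j)]

theorem HilbertBasis.eq_zero_of_forall_inner_eq_zero {ι : Type*} (b : HilbertBasis ι 𝕜 E)
    {x : E} (h : ∀ i, ⟪b i, x⟫_𝕜 = 0) : x = 0 := by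
  rw [← b.repr.map_eq_zero_iff]
  ext i
  simp [b.repr_apply_apply, h]

theorem HilbertBasis.nonempty_of_not_finiteDimensional [CompleteSpace E]
    [TopologicalSpace.SeparableSpace E] (ι : Type*) [Denumerable ι]
    (h : ¬ FiniteDimensional 𝕜 E) : Nonempty (HilbertBasis ι 𝕜 E) := by
  obtain ⟨w, b, -⟩ := exists_hilbertBasis 𝕜 E
  have : Countable w := b.orthonormal.countable
  have : Infinite w := by
    by_contra hfin
    have := not_infinite_iff_finite.1 hfin
    have := Fintype.ofFinite w
    exact h (.of_basis b.toOrthonormalBasis.toBasis)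
  have := (nonempty_denumerable w).some
  let σ := Denumerable.equiv₂ ι w
  exact ⟨.mk (b.orthonormal.comp σ σ.injective) (by
    rw [σ.surjective.range_comp]; exact b.dense_span.ge)⟩

end Hilbert

section ColumnSpan

variable (𝕜 : Type*) {E : Type*} [RCLike 𝕜] [NormedAddCommGroup E] [InnerProductSpace 𝕜 E]

def columnSpan (v : ℕ × ℕ → E) (n : ℕ) : Submodule 𝕜 E :=
  (span 𝕜 (v '' {i | i.2 ≤ n})).topologicalClosure

variable {𝕜} {v : ℕ × ℕ → E}

theorem isClosed_columnSpan (n : ℕ) : IsClosed (columnSpan 𝕜 v n : Set E) :=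
  isClosed_topologicalClosure _

theorem columnSpan_mono : Monotone (columnSpan 𝕜 v) := fun _ _ h =>
  topologicalClosure_mono (span_mono (Set.image_mono fun _ hi => le_trans hi h))

theorem mem_columnSpan {i : ℕ × ℕ} {n : ℕ} (hi : i.2 ≤ n) : v i ∈ columnSpan 𝕜 v n :=
  le_topologicalClosure _ (subset_span ⟨i, hi, rfl⟩)

theorem inner_eq_zero_of_mem_columnSpan {w x : E} {n : ℕ}
    (hw : ∀ i : ℕ × ℕ, i.2 ≤ n → ⟪w, v i⟫_𝕜 = 0) (hx : x ∈ columnSpan 𝕜 v n) : ⟪w, x⟫_𝕜 = 0 :=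
  topologicalClosure_minimal (span 𝕜 _) (t := LinearMap.ker (innerₛₗ 𝕜 w))
    (span_le.2 (by rintro _ ⟨i, hi, rfl⟩; exact hw i hi)) (innerSL 𝕜 w).isClosed_ker hx

theorem dense_iUnion_columnSpan [CompleteSpace E] (hv : ∀ x, (∀ i, ⟪v i, x⟫_𝕜 = 0) → x = 0) :
    Dense (⋃ n, (columnSpan 𝕜 v n : Set E)) := by
  rw [← coe_iSup_of_directed _ columnSpan_mono.directed_le, dense_iff_topologicalClosure_eq_top,
    topologicalClosure_eq_top_iff, eq_bot_iff]
  exact fun x hx => hv x fun i =>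
    inner_right_of_mem_orthogonal (mem_iSup_of_mem i.2 (mem_columnSpan le_rfl)) hx

theorem not_finiteDimensional_columnSpan (w : ℕ → E) {n : ℕ}
    (hpair : Pairwise fun b b' => ⟪w b, v (b', n)⟫_𝕜 = 0) (hdiag : ∀ b, ⟪w b, v (b, n)⟫_𝕜 ≠ 0) :
    ¬ FiniteDimensional 𝕜 (columnSpan 𝕜 v n) :=
  not_finiteDimensional_of_dual (fun b => v (b, n)) (fun _ => mem_columnSpan le_rfl)
    (fun b => innerₛₗ 𝕜 (w b)) hpair hdiag

theorem not_finiteDimensional_columnSpan_quotient (w : ℕ → E) {n : ℕ}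
    (hw : ∀ b, ∀ i : ℕ × ℕ, i.2 ≤ n → ⟪w b, v i⟫_𝕜 = 0)
    (hpair : Pairwise fun b b' => ⟪w b, v (b', n + 1)⟫_𝕜 = 0)
    (hdiag : ∀ b, ⟪w b, v (b, n + 1)⟫_𝕜 ≠ 0) :
    ¬ FiniteDimensional 𝕜
      (columnSpan 𝕜 v (n + 1) ⧸ (columnSpan 𝕜 v n).comap (columnSpan 𝕜 v (n + 1)).subtype) :=
  not_finiteDimensional_quotient_of_dual (fun b => v (b, n + 1)) (fun _ => mem_columnSpan le_rfl)
    (fun b => innerₛₗ 𝕜 (w b)) (fun b _ hx => inner_eq_zero_of_mem_columnSpan (hw b) hx)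
    hpair hdiag

end ColumnSpan

section OrthonormalColumns

variable {𝕜 E : Type*} [RCLike 𝕜] [NormedAddCommGroup E] [InnerProductSpace 𝕜 E]
  {e : ℕ × ℕ → E}

theorem Orthonormal.inner_eq_zero_of_snd_ne (he : Orthonormal 𝕜 e) {i j : ℕ × ℕ}
    (h : i.2 ≠ j.2) : ⟪e i, e j⟫_𝕜 = 0 :=
  he.inner_eq_zero fun hij => h (congrArg Prod.snd hij)

theorem Orthonormal.not_finiteDimensional_columnSpan (he : Orthonormal 𝕜 e) (n : ℕ) :
    ¬ FiniteDimensional 𝕜 (columnSpan 𝕜 e n) :=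
  _root_.not_finiteDimensional_columnSpan (fun b => e (b, n))
    (fun _ _ h => he.inner_eq_zero fun h' => h (congrArg Prod.fst h'))
    (fun _ => inner_self_ne_zero.2 (he.ne_zero _))

theorem Orthonormal.not_finiteDimensional_columnSpan_quotient (he : Orthonormal 𝕜 e) (n : ℕ) :
    ¬ FiniteDimensional 𝕜
      (columnSpan 𝕜 e (n + 1) ⧸ (columnSpan 𝕜 e n).comap (columnSpan 𝕜 e (n + 1)).subtype) :=
  _root_.not_finiteDimensional_columnSpan_quotient (fun b => e (b, n + 1))
    (fun _ _ hi => he.inner_eq_zero_of_snd_ne (by omega))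
    (fun _ _ h => he.inner_eq_zero fun h' => h (congrArg Prod.fst h'))
    (fun _ => inner_self_ne_zero.2 (he.ne_zero _))

end OrthonormalColumns

noncomputable section

namespace TransversalFlags

open Lagrange

def ν (j : ℕ) : ℂ := ((j + 2 : ℕ) : ℂ)⁻¹

theorem ν_ne_zero (j : ℕ) : ν j ≠ 0 := inv_ne_zero (Nat.cast_ne_zero.2 (by omega))

theorem ν_injective : Function.Injective ν := fun i j h => by simpa [ν] using h

theorem norm_ν_lt_one (j : ℕ) : ‖ν j‖ < 1 := by
  rw [ν, norm_inv, Complex.norm_natCast]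
  exact inv_lt_one_of_one_lt₀ (by norm_cast; omega)

theorem tendsto_ν : Tendsto ν atTop (𝓝[≠] 0) :=
  tendsto_nhdsWithin_iff.2
    ⟨(tendsto_add_atTop_iff_nat 2).2 tendsto_inv_atTop_nhds_zero_nat, .of_forall ν_ne_zero⟩

variable {H : Type*} [NormedAddCommGroup H] [InnerProductSpace ℂ H]

def geomVector (e : ℕ × ℕ → H) (i : ℕ × ℕ) : H := ∑' k, ν i.2 ^ k • e (i.1, k)

def testVector (e : ℕ × ℕ → H) (b : ℕ) (Q : ℂ[X]) : H :=
  Q.sum fun k a => starRingEnd ℂ a • e (b, k)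

variable {e : ℕ × ℕ → H}

theorem inner_geomVector_eq_tsum [CompleteSpace H] (he : Orthonormal ℂ e) (x : H) (i : ℕ × ℕ) :
    ⟪x, geomVector e i⟫_ℂ = ∑' k, ⟪x, e (i.1, k)⟫_ℂ * ν i.2 ^ k := by
  have hsum : Summable fun k => ν i.2 ^ k • e (i.1, k) := .of_norm <| by
    simpa [norm_smul, he.norm_eq_one] using
      summable_geometric_of_lt_one (norm_nonneg _) (norm_ν_lt_one i.2)
  simpa [geomVector, inner_smul_right, mul_comm] using (innerSL ℂ x).map_tsum hsum

theorem inner_geomVector [CompleteSpace H] (he : Orthonormal ℂ e) (b k : ℕ)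
    (i : ℕ × ℕ) : ⟪e (b, k), geomVector e i⟫_ℂ = if b = i.1 then ν i.2 ^ k else 0 := by
  classical
  rw [inner_geomVector_eq_tsum he]
  split_ifs with hb <;> simp [orthonormal_iff_ite.1 he, hb]

theorem inner_testVector (b : ℕ) (Q : ℂ[X]) (x : H) :
    ⟪testVector e b Q, x⟫_ℂ = Q.sum fun k a => a * ⟪e (b, k), x⟫_ℂ := by
  simp [testVector, Polynomial.sum_def, mul_comm]

theorem inner_testVector_geomVector [CompleteSpace H] (he : Orthonormal ℂ e) (b : ℕ) (Q : ℂ[X])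
    (i : ℕ × ℕ) : ⟪testVector e b Q, geomVector e i⟫_ℂ = if b = i.1 then Q.eval (ν i.2) else 0 := by
  rw [inner_testVector]
  simp only [inner_geomVector he]
  split_ifs
  · rw [eval_eq_sum]
  · simp [Polynomial.sum_def]

theorem inner_testVector_geomVector_eq_zero [CompleteSpace H] (he : Orthonormal ℂ e) (b : ℕ)
    {Q : ℂ[X]} {m : ℕ} (hQ : ∀ j ≤ m, Q.eval (ν j) = 0) {i : ℕ × ℕ} (hi : i.2 ≤ m) :
    ⟪testVector e b Q, geomVector e i⟫_ℂ = 0 := by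
  rw [inner_testVector_geomVector he, hQ i.2 hi, ite_self]

def nodalPoly (m : ℕ) : ℂ[X] := nodal (Finset.range (m + 1)) ν

theorem eval_nodalPoly_eq_zero {m j : ℕ} (hj : j ≤ m) : (nodalPoly m).eval (ν j) = 0 :=
  eval_nodal_at_node (Finset.mem_range.2 (by omega))

theorem eval_nodalPoly_ne_zero {m j : ℕ} (hj : m < j) : (nodalPoly m).eval (ν j) ≠ 0 :=
  eval_nodal_not_at_node fun i hi h => by
    have := ν_injective h
    simp at hi
    omega

theorem coeff_zero_nodalPoly_ne_zero (m : ℕ) : (nodalPoly m).coeff 0 ≠ 0 := by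
  rw [coeff_zero_eq_eval_zero]
  exact eval_nodal_not_at_node fun i _ h => ν_ne_zero i h.symm

theorem eq_zero_of_mem_columnSpan_of_mem_columnSpan_geomVector [CompleteSpace H]
    (b : HilbertBasis (ℕ × ℕ) ℂ H) {n m : ℕ} {x : H} (hE : x ∈ columnSpan ℂ b n)
    (hF : x ∈ columnSpan ℂ (geomVector b) m) : x = 0 := by
  refine b.eq_zero_of_forall_inner_eq_zero fun ⟨β, k⟩ => ?_
  have hc : ∀ k, n < k → ⟪b (β, k), x⟫_ℂ = 0 := fun k hk =>
    inner_eq_zero_of_mem_columnSpan (fun i hi => b.orthonormal.inner_eq_zero_of_snd_ne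
      (by dsimp only; omega)) hE
  have hsum (t : ℕ) :
      (nodalPoly m * X ^ t).sum (fun k a => a * ⟪b (β, k), x⟫_ℂ) = 0 := by
    rw [← inner_testVector]
    refine inner_eq_zero_of_mem_columnSpan (fun i hi => ?_) hF
    refine inner_testVector_geomVector_eq_zero b.orthonormal β (fun j hj => ?_) hi
    rw [eval_mul, eval_nodalPoly_eq_zero hj, zero_mul]
  exact congrFun (eq_zero_of_sum_mul_X_pow_eq_zero (coeff_zero_nodalPoly_ne_zero m) hc hsum) k

theorem dense_iUnion_columnSpan_geomVector [CompleteSpace H] (b : HilbertBasis (ℕ × ℕ) ℂ H) :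
    Dense (⋃ n, (columnSpan ℂ (geomVector b) n : Set H)) := by
  refine dense_iUnion_columnSpan fun x hx => b.eq_zero_of_forall_inner_eq_zero fun ⟨β, k⟩ => ?_
  have hbound (k : ℕ) : ‖⟪x, b (β, k)⟫_ℂ‖ ≤ ‖x‖ := by
    simpa [b.orthonormal.norm_eq_one] using norm_inner_le_norm (𝕜 := ℂ) x (b (β, k))
  have hpow (j : ℕ) : ∑' k, ⟪x, b (β, k)⟫_ℂ * ν j ^ k = 0 := by
    rw [← inner_geomVector_eq_tsum b.orthonormal x (β, j)]
    exact inner_eq_zero_symm.1 (hx (β, j))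
  rw [inner_eq_zero_symm]
  exact congrFun (eq_zero_of_tsum_mul_pow_eq_zero hbound tendsto_ν hpow) k

theorem not_finiteDimensional_columnSpan_geomVector [CompleteSpace H] (he : Orthonormal ℂ e)
    (m : ℕ) : ¬ FiniteDimensional ℂ (columnSpan ℂ (geomVector e) m) :=
  not_finiteDimensional_columnSpan (fun β => e (β, 0))
    (fun β β' h => by simp [inner_geomVector he, h])
    (fun β => by simp [inner_geomVector he])

theorem not_finiteDimensional_columnSpan_geomVector_quotient [CompleteSpace H]
    (he : Orthonormal ℂ e) (m : ℕ) :
    ¬ FiniteDimensional ℂ (columnSpan ℂ (geomVector e) (m + 1) ⧸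
      (columnSpan ℂ (geomVector e) m).comap (columnSpan ℂ (geomVector e) (m + 1)).subtype) :=
  not_finiteDimensional_columnSpan_quotient (fun β => testVector e β (nodalPoly m))
    (fun β _ hi => inner_testVector_geomVector_eq_zero he β (fun _ => eval_nodalPoly_eq_zero) hi)
    (fun β β' h => by simp [inner_testVector_geomVector he, h])
    (fun β => by simp [inner_testVector_geomVector he, eval_nodalPoly_ne_zero])

end TransversalFlags

end

open TransversalFlags in
/-- In a complex separable infinite-dimensional Hilbert space `H` there exist two increasing
sequences `(E n)` and `(F n)` of infinite-dimensional closed subspaces, each subspace of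
infinite codimension in the next one, whose unions are both dense in `H`, and such that the
two unions intersect only in `0`. -/
theorem stmt_12 (H : Type) [NormedAddCommGroup H] [InnerProductSpace ℂ H] [CompleteSpace H]
    [TopologicalSpace.SeparableSpace H] (hdim : ¬ FiniteDimensional ℂ H) :
    ∃ E F : ℕ → Submodule ℂ H,
      (∀ n, IsClosed (E n : Set H)) ∧ (∀ n, IsClosed (F n : Set H)) ∧
      (∀ n, E n ≤ E (n + 1)) ∧ (∀ n, F n ≤ F (n + 1)) ∧
      (∀ n, ¬ FiniteDimensional ℂ (E n)) ∧ (∀ n, ¬ FiniteDimensional ℂ (F n)) ∧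
      (∀ n, ¬ FiniteDimensional ℂ
        (↥(E (n + 1)) ⧸ Submodule.comap (E (n + 1)).subtype (E n))) ∧
      (∀ n, ¬ FiniteDimensional ℂ
        (↥(F (n + 1)) ⧸ Submodule.comap (F (n + 1)).subtype (F n))) ∧
      Dense (⋃ n, (E n : Set H)) ∧ Dense (⋃ n, (F n : Set H)) ∧
      (⋃ n, (E n : Set H)) ∩ (⋃ n, (F n : Set H)) = {0} := by
  obtain ⟨b⟩ := HilbertBasis.nonempty_of_not_finiteDimensional (ℕ × ℕ) hdim
  refine ⟨columnSpan ℂ b, columnSpan ℂ (geomVector b), isClosed_columnSpan, isClosed_columnSpan,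
    fun n => columnSpan_mono n.le_succ, fun n => columnSpan_mono n.le_succ,
    b.orthonormal.not_finiteDimensional_columnSpan,
    not_finiteDimensional_columnSpan_geomVector b.orthonormal,
    b.orthonormal.not_finiteDimensional_columnSpan_quotient,
    not_finiteDimensional_columnSpan_geomVector_quotient b.orthonormal,
    dense_iUnion_columnSpan fun x => b.eq_zero_of_forall_inner_eq_zero,
    dense_iUnion_columnSpan_geomVector b, ?_⟩
  refine Set.eq_singleton_iff_unique_mem.2 ⟨⟨Set.mem_iUnion.2 ⟨0, zero_mem _⟩,
    Set.mem_iUnion.2 ⟨0, zero_mem _⟩⟩, fun x ⟨hE, hF⟩ => ?_⟩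
  obtain ⟨n, hn⟩ := Set.mem_iUnion.1 hE
  obtain ⟨m, hm⟩ := Set.mem_iUnion.1 hF
  exact eq_zero_of_mem_columnSpan_of_mem_columnSpan_geomVector b hn hm
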